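/- arXiv:2102.00588 — 5 statements merged into one kernel-verified Lean document; each statement's English description precedes it below -/
import Mathlib

section
/- For α > 2, the infinite sum ∑_{j=2}^∞ Γ(1+α/2)·Γ(j) / Γ(j+α/2) converges and equals 2/(α-2). -/
open Real Filter Topology

/-!
Put `s = α / 2` and `u x = Γ(x + 1) / Γ(x + s)`. The recurrence `Γ(z + 1) = z Γ(z)` gives
`u x - u (x + 1) = (s - 1) Γ(x + 1) / Γ(x + 1 + s)`, so the series telescopes to
`Γ(1 + s) u 1 / (s - 1) = 1 / (s - 1)`, provided `u x → 0`. That follows from the log-convexity of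
`Γ`, which yields the Wendel-type bound `u x ≤ x ^ (1 - s)`.
-/

theorem hasSum_sub_succ_of_antitone {f : ℕ → ℝ} {l : ℝ} (hf : Antitone f)
    (h : Tendsto f atTop (𝓝 l)) : HasSum (fun n ↦ f n - f (n + 1)) (f 0 - l) := by
  refine (hasSum_iff_tendsto_nat_of_nonneg (fun n ↦ sub_nonneg.2 (hf n.le_succ)) _).2 ?_
  simp only [Finset.sum_range_sub']
  exact tendsto_const_nhds.sub h

namespace Real

theorem Gamma_add_one_div_Gamma_add_le_rpow {x s : ℝ} (hx : 0 < x) (hs : 1 ≤ s) :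
    Gamma (x + 1) / Gamma (x + s) ≤ x ^ (1 - s) := by
  have hs₀ : 0 < s := by linarith
  have hxs : 0 < x + s := by linarith
  -- log-convexity at `x + 1 = (1 - 1/s) • x + (1/s) • (x + s)`
  have hconv := convexOn_log_Gamma.2 (Set.mem_Ioi.2 hx) (Set.mem_Ioi.2 hxs)
    (sub_nonneg.2 ((div_le_one hs₀).2 hs)) (one_div_nonneg.2 hs₀.le) (sub_add_cancel 1 (1 / s))
  have hpoint : (1 - 1 / s) • x + (1 / s) • (x + s) = x + 1 := by
    simp only [smul_eq_mul]; field_simp; ring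
  rw [hpoint] at hconv
  simp only [Function.comp_apply, smul_eq_mul] at hconv
  have hrec : log (Gamma (x + 1)) = log x + log (Gamma x) := by
    rw [Gamma_add_one hx.ne', log_mul hx.ne' (Gamma_pos_of_pos hx).ne']
  have hlog : log (Gamma (x + 1)) - log (Gamma (x + s)) ≤ (1 - s) * log x := by
    have hscaled := mul_le_mul_of_nonneg_left hconv hs₀.le
    rw [mul_add, ← mul_assoc, ← mul_assoc, mul_sub, mul_one_div_cancel hs₀.ne', mul_one,
      one_mul, hrec] at hscaled
    nlinarith
  calc Gamma (x + 1) / Gamma (x + s)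
      = exp (log (Gamma (x + 1)) - log (Gamma (x + s))) := by
        rw [exp_sub, exp_log (Gamma_pos_of_pos (by linarith)), exp_log (Gamma_pos_of_pos hxs)]
    _ ≤ exp ((1 - s) * log x) := exp_le_exp.2 hlog
    _ = x ^ (1 - s) := by rw [rpow_def_of_pos hx, mul_comm]

theorem tendsto_Gamma_add_one_div_Gamma_add {s : ℝ} (hs : 1 < s) :
    Tendsto (fun x ↦ Gamma (x + 1) / Gamma (x + s)) atTop (𝓝 0) := by
  have hdecay : Tendsto (fun x : ℝ ↦ x ^ (1 - s)) atTop (𝓝 0) := by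
    simpa only [neg_sub] using tendsto_rpow_neg_atTop (sub_pos.2 hs)
  refine squeeze_zero' ?_ ?_ hdecay
  · filter_upwards [eventually_gt_atTop 0] with x hx
    exact div_nonneg (Gamma_pos_of_pos (by linarith)).le (Gamma_pos_of_pos (by linarith)).le
  · filter_upwards [eventually_gt_atTop 0] with x hx
    exact Gamma_add_one_div_Gamma_add_le_rpow hx hs.le

theorem Gamma_add_one_div_Gamma_add_sub {x s : ℝ} (hx : 0 < x) (hs : 0 < s) :
    Gamma (x + 1) / Gamma (x + s) - Gamma (x + 1 + 1) / Gamma (x + 1 + s)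
      = (s - 1) * (Gamma (x + 1) / Gamma (x + 1 + s)) := by
  have hxs : 0 < x + s := by linarith
  rw [Gamma_add_one (by linarith : x + 1 ≠ 0), add_right_comm, Gamma_add_one hxs.ne']
  have hΓ := (Gamma_pos_of_pos hxs).ne'
  field_simp
  ring

end Real

theorem hasSum_Gamma_mul_Gamma_div_Gamma {s : ℝ} (hs : 1 < s) :
    HasSum (fun n : ℕ ↦ Gamma (1 + s) * Gamma (n + 2) / Gamma (n + 2 + s)) (1 / (s - 1)) := by
  set u : ℕ → ℝ := fun n ↦ Gamma ((n + 1 : ℝ) + 1) / Gamma ((n + 1 : ℝ) + s)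
  have hdiff (n : ℕ) : u n - u (n + 1) = (s - 1) * (Gamma (n + 2) / Gamma (n + 2 + s)) := by
    have hstep := Gamma_add_one_div_Gamma_add_sub (x := n + 1) (by positivity) (by linarith)
    simp only [u, Nat.cast_succ]
    rw [hstep]
    ring_nf
  have hanti : Antitone u := antitone_nat_of_succ_le fun n ↦ by
    have hpos : 0 < Gamma (n + 2) / Gamma (n + 2 + s) :=
      div_pos (Gamma_pos_of_pos (by positivity)) (Gamma_pos_of_pos (by positivity))
    nlinarith [hdiff n]
  have hlim : Tendsto u atTop (𝓝 0) :=
    (tendsto_Gamma_add_one_div_Gamma_add hs).comp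
      (tendsto_natCast_atTop_atTop.atTop_add tendsto_const_nhds)
  have hsum := (hasSum_sub_succ_of_antitone hanti hlim).mul_left (Gamma (1 + s) / (s - 1))
  have hterm : (fun n : ℕ ↦ Gamma (1 + s) * Gamma (n + 2) / Gamma (n + 2 + s))
      = fun n ↦ Gamma (1 + s) / (s - 1) * (u n - u (n + 1)) := by
    funext n
    rw [hdiff n]
    field_simp [(sub_pos.2 hs).ne']
  have hvalue : Gamma (1 + s) / (s - 1) * (u 0 - 0) = 1 / (s - 1) := by
    have hΓ := (Gamma_pos_of_pos (by linarith : (0 : ℝ) < 1 + s)).ne'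
    simp only [u, Nat.cast_zero, zero_add, one_add_one_eq_two, Gamma_two, sub_zero]
    field_simp
  rwa [hterm, ← hvalue]

/-- For `α > 2`, the sum `∑_{j=2}^∞ Γ(1+α/2)·Γ(j)/Γ(j+α/2)` converges and
equals `2/(α-2)` (the MISR in a Poisson downlink cellular network). -/
theorem misr_ppp_sum (α : ℝ) (hα : 2 < α) :
    HasSum
      (fun n : ℕ =>
        Real.Gamma (1 + α / 2) * Real.Gamma ((n : ℝ) + 2) /
          Real.Gamma (((n : ℝ) + 2) + α / 2))
      (2 / (α - 2)) := by
  convert hasSum_Gamma_mul_Gamma_div_Gamma (s := α / 2) (by linarith) using 1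
  field_simp
end

section
/- Let J_K^QSI = exp(-a·D_K(δ)) and J_K^FVI = exp(-a·K) where a > 0, 0 < δ < 1, and D_K(δ) = Γ(K+δ)/(Γ(K)Γ(1+δ)). Then J_K^QSI > J_K^FVI for every integer K ≥ 2. -/
open Real

/-- The diversity factor `D_K(δ) = Γ(K+δ)/(Γ(K)·Γ(1+δ))`. -/
noncomputable def diversityFactor (δ : ℝ) (K : ℕ) : ℝ :=
  Real.Gamma ((K : ℝ) + δ) / (Real.Gamma K * Real.Gamma (1 + δ))

/-! `D_K(δ) = ∏_{k=1}^{K-1} (k + δ)/k`, so for `0 < δ < 1` every factor lies in `(1, (k+1)/k)` and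
the product telescopes to a bound strictly below `K`; the exponential is strictly decreasing. -/

theorem diversityFactor_one {δ : ℝ} (hδ : -1 < δ) : diversityFactor δ 1 = 1 := by
  have hΓ : Real.Gamma (1 + δ) ≠ 0 := (Real.Gamma_pos_of_pos (by linarith)).ne'
  simp [diversityFactor, hΓ]

theorem diversityFactor_succ (δ : ℝ) {K : ℕ} (hK : K ≠ 0) (hKδ : (K : ℝ) + δ ≠ 0) :
    diversityFactor δ (K + 1) = ((K : ℝ) + δ) / K * diversityFactor δ K := by
  have hK' : (K : ℝ) ≠ 0 := Nat.cast_ne_zero.mpr hK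
  have hshift : ((K + 1 : ℕ) : ℝ) + δ = ((K : ℝ) + δ) + 1 := by push_cast; ring
  rw [diversityFactor, diversityFactor, hshift, Nat.cast_succ, Real.Gamma_add_one hKδ,
    Real.Gamma_add_one hK']
  field_simp

theorem diversityFactor_succ_le {δ : ℝ} (hδ0 : 0 ≤ δ) {K : ℕ} (hK : K ≠ 0)
    (ih : diversityFactor δ K ≤ K) : diversityFactor δ (K + 1) ≤ K + δ := by
  have hKpos : (0 : ℝ) < K := by positivity
  rw [diversityFactor_succ δ hK (by positivity)]
  calc ((K : ℝ) + δ) / K * diversityFactor δ K ≤ ((K : ℝ) + δ) / K * K := by gcongr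
    _ = K + δ := div_mul_cancel₀ _ hKpos.ne'

theorem diversityFactor_le_self {δ : ℝ} (hδ0 : 0 ≤ δ) (hδ1 : δ ≤ 1) {K : ℕ} (hK : 1 ≤ K) :
    diversityFactor δ K ≤ K := by
  induction K, hK using Nat.le_induction with
  | base => simp [diversityFactor_one (by linarith : (-1 : ℝ) < δ)]
  | succ K hK ih =>
    push_cast
    linarith [diversityFactor_succ_le hδ0 (by omega) ih]

theorem diversityFactor_lt_self {δ : ℝ} (hδ0 : 0 ≤ δ) (hδ1 : δ < 1) {K : ℕ} (hK : 2 ≤ K) :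
    diversityFactor δ K < K := by
  obtain ⟨k, rfl⟩ : ∃ k, K = k + 1 := ⟨K - 1, by omega⟩
  have hk : k ≠ 0 := by omega
  push_cast
  linarith [diversityFactor_succ_le hδ0 hk (diversityFactor_le_self hδ0 hδ1.le (by omega))]

/-- For `a > 0`, `0 < δ < 1` and `K ≥ 2`, the joint success probability under
quasi-static interference `exp(-a·D_K(δ))` strictly exceeds that under
fast-varying interference `exp(-a·K)`. -/
theorem jsp_qsi_gt_fvi (a δ : ℝ) (ha : 0 < a) (hδ0 : 0 < δ) (hδ1 : δ < 1)
    (K : ℕ) (hK : 2 ≤ K) :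
    Real.exp (-(a * diversityFactor δ K)) > Real.exp (-(a * K)) := by
  have hD : diversityFactor δ K < K := diversityFactor_lt_self hδ0.le hδ1 hK
  exact Real.exp_lt_exp.mpr (neg_lt_neg (mul_lt_mul_of_pos_left hD ha))
end

section
/- For fixed 0 < δ < 1 and fixed r > 0, the function a ↦ (exp(a(1-δ)) - 1)/(exp(a) - 1) is strictly decreasing on (0, ∞). -/
/-!
With `t = exp a`, the coefficient is `(t ^ (1 - δ) - 1) / (t - 1)`, the slope of the secant of the
strictly concave function `t ↦ t ^ (1 - δ)` through `1` and `t`. Such slopes strictly decrease as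
`t` grows, and `a ↦ exp a` maps `(0, ∞)` increasingly onto `(1, ∞)`.
-/

open Real Set

theorem StrictConcaveOn.strictAntiOn_secant {𝕜 : Type*} [Field 𝕜] [LinearOrder 𝕜]
    [IsStrictOrderedRing 𝕜] {s : Set 𝕜} {f : 𝕜 → 𝕜} (hf : StrictConcaveOn 𝕜 s f) {a : 𝕜}
    (ha : a ∈ s) :
    StrictAntiOn (fun x => (f x - f a) / (x - a)) (s \ {a}) :=
  fun _ hx _ hy hxy => hf.secant_strict_mono ha hx.1 hy.1 hx.2 hy.2 hxy

theorem Real.strictAntiOn_rpow_secant_one {p : ℝ} (hp₀ : 0 < p) (hp₁ : p < 1) :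
    StrictAntiOn (fun t : ℝ => (t ^ p - 1) / (t - 1)) (Ioi 1) := by
  have h := (strictConcaveOn_rpow hp₀ hp₁).strictAntiOn_secant (a := 1) (mem_Ici.2 zero_le_one)
  simp only [one_rpow] at h
  exact h.mono fun t (ht : 1 < t) => ⟨zero_le_one.trans ht.le, ht.ne'⟩

theorem correlation_coefficient_strictAnti_general (δ : ℝ) (hδ0 : 0 < δ) (hδ1 : δ < 1) :
    StrictAntiOn (fun a : ℝ => (Real.exp (a * (1 - δ)) - 1) / (Real.exp a - 1))
      (Set.Ioi 0) := by
  have hsecant := strictAntiOn_rpow_secant_one (p := 1 - δ) (by linarith) (by linarith)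
  have hexp : StrictMonoOn exp (Ioi 0) := exp_strictMono.strictMonoOn _
  have hmaps : MapsTo exp (Ioi 0) (Ioi 1) := fun _ ha => one_lt_exp_iff.2 ha
  simpa only [Function.comp_def, ← exp_mul] using hsecant.comp_strictMonoOn hexp hmaps

/-- For fixed `0 < δ < 1` (and fixed link distance `r > 0`), the temporal correlation
coefficient `a ↦ (exp(a(1-δ)) - 1)/(exp(a) - 1)` is strictly decreasing on `(0, ∞)`. -/
theorem correlation_coefficient_strictAnti (δ r : ℝ) (hδ0 : 0 < δ) (hδ1 : δ < 1)
    (hr : 0 < r) :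
    StrictAntiOn (fun a : ℝ => (Real.exp (a * (1 - δ)) - 1) / (Real.exp a - 1))
      (Set.Ioi 0) :=
  correlation_coefficient_strictAnti_general δ hδ0 hδ1
end

section
/- For 0 ≤ r ≤ 2R, the area of the intersection of two disks of radius R whose centers are at distance r apart equals 2R²·arccos(r/(2R)) - r·√(R² - r²/4). -/
/-!
Place the centres at `(±d, 0)` with `d = r / 2`; any two configurations with the same distance
between the centres differ by a reflection followed by a translation, which preserves volume.
The farther centre is the binding constraint, so the vertical chord of the lens at abscissa `x`
has length `2 √(R² - (|x| + d)²)`. The lens is thus two circular segments at distance `d` from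
their centres, each of area `2 ∫_d^R √(R² - u²) du = R² arccos (d / R) - d √(R² - d²)`.
-/

open Real MeasureTheory Set Metric

theorem hasDerivAt_mul_sqrt_sq_sub_sq_sub_arccos {R x : ℝ} (hR : 0 < R) (hx : x ∈ Ioo (-R) R) :
    HasDerivAt (fun u ↦ (u * √(R ^ 2 - u ^ 2) - R ^ 2 * arccos (u / R)) / 2)
      √(R ^ 2 - x ^ 2) x := by
  have hpos : 0 < R ^ 2 - x ^ 2 := by nlinarith [hx.1, hx.2]
  have hxR : x / R ∈ Ioo (-1) 1 := by
    constructor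
    · rw [lt_div_iff₀ hR]; linarith [hx.1]
    · rw [div_lt_iff₀ hR]; linarith [hx.2]
  have hsqrt :
      HasDerivAt (fun u ↦ √(R ^ 2 - u ^ 2)) (-(2 * x) / (2 * √(R ^ 2 - x ^ 2))) x := by
    simpa using ((hasDerivAt_pow 2 x).const_sub (R ^ 2)).sqrt hpos.ne'
  have harccos : HasDerivAt (fun u ↦ arccos (u / R)) (-(1 / √(1 - (x / R) ^ 2)) * (1 / R)) x :=
    (hasDerivAt_arccos hxR.1.ne' hxR.2.ne).comp (h₂ := arccos) x ((hasDerivAt_id x).div_const R)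
  have hnorm : √(1 - (x / R) ^ 2) = √(R ^ 2 - x ^ 2) / R := by
    rw [show 1 - (x / R) ^ 2 = (R ^ 2 - x ^ 2) / R ^ 2 by field_simp,
      sqrt_div' _ (sq_nonneg R), sqrt_sq hR.le]
  refine ((((hasDerivAt_id x).mul hsqrt).sub (harccos.const_mul (R ^ 2))).div_const 2
    ).congr_deriv ?_
  have hsqrt_ne : √(R ^ 2 - x ^ 2) ≠ 0 := (sqrt_pos.mpr hpos).ne'
  rw [hnorm]
  field_simp
  rw [sq_sqrt hpos.le, id]
  ring

theorem integral_sqrt_sq_sub_sq {R a : ℝ} (hR : 0 < R) (ha : -R ≤ a) (haR : a ≤ R) :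
    ∫ u in a..R, √(R ^ 2 - u ^ 2) = (R ^ 2 * arccos (a / R) - a * √(R ^ 2 - a ^ 2)) / 2 := by
  rw [intervalIntegral.integral_eq_sub_of_hasDerivAt_of_le haR (by fun_prop)
    (fun x hx ↦ hasDerivAt_mul_sqrt_sq_sub_sq_sub_arccos hR ⟨ha.trans_lt hx.1, hx.2⟩)
    (by apply Continuous.intervalIntegrable; fun_prop)]
  simp only [sub_self, sqrt_zero, mul_zero, div_self hR.ne', arccos_one, zero_div, zero_sub]
  ring

theorem integral_Ioi_sqrt_sq_sub_sq {R a : ℝ} (hR : 0 < R) (ha : -R ≤ a) (haR : a ≤ R) :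
    ∫ u in Ioi a, √(R ^ 2 - u ^ 2) = (R ^ 2 * arccos (a / R) - a * √(R ^ 2 - a ^ 2)) / 2 := by
  rw [← integral_sqrt_sq_sub_sq hR ha haR, intervalIntegral.integral_of_le haR]
  refine setIntegral_eq_of_subset_of_forall_sdiff_eq_zero measurableSet_Ioi Ioc_subset_Ioi_self
    fun u hu ↦ sqrt_eq_zero'.mpr ?_
  have : R < u := lt_of_not_ge fun h ↦ hu.2 ⟨hu.1, h⟩
  nlinarith

theorem Real.volume_setOf_sq_le (c : ℝ) :
    volume {y : ℝ | y ^ 2 ≤ c} = ENNReal.ofReal (2 * √c) := by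
  rcases le_or_gt 0 c with hc | hc
  · have : {y : ℝ | y ^ 2 ≤ c} = Icc (-√c) √c := ext fun y ↦ sq_le hc
    rw [this, volume_Icc]
    ring_nf
  · have : {y : ℝ | y ^ 2 ≤ c} = ∅ :=
      eq_empty_of_forall_notMem fun y hy ↦ (sq_nonneg y).not_gt (hy.trans_lt hc)
    simp [this, sqrt_eq_zero'.mpr hc.le]

theorem volume_setOf_snd_sq_le {f : ℝ → ℝ} (hf : Measurable f) :
    volume {p : ℝ × ℝ | p.2 ^ 2 ≤ f p.1} = ∫⁻ x, ENNReal.ofReal (2 * √(f x)) := by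
  rw [Measure.volume_eq_prod, Measure.prod_apply (measurableSet_le (by fun_prop) (by fun_prop))]
  exact lintegral_congr fun x ↦ Real.volume_setOf_sq_le (f x)

theorem add_sq_le_and_sub_sq_le_iff {x y d c : ℝ} (hd : 0 ≤ d) :
    (x + d) ^ 2 + y ^ 2 ≤ c ∧ (x - d) ^ 2 + y ^ 2 ≤ c ↔ y ^ 2 ≤ c - (|x| + d) ^ 2 := by
  rcases abs_cases x with ⟨hx, hx0⟩ | ⟨hx, hx0⟩ <;> rw [hx] <;>
    exact ⟨fun h ↦ by nlinarith [h.1, h.2], fun h ↦ ⟨by nlinarith, by nlinarith⟩⟩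

theorem volume_lens_prod {R d : ℝ} (hR : 0 < R) (hd : 0 ≤ d) (hdR : d ≤ R) :
    volume {p : ℝ × ℝ | (p.1 + d) ^ 2 + p.2 ^ 2 ≤ R ^ 2 ∧
        (p.1 - d) ^ 2 + p.2 ^ 2 ≤ R ^ 2}
      = ENNReal.ofReal (2 * (R ^ 2 * arccos (d / R) - d * √(R ^ 2 - d ^ 2))) := by
  have hg : Integrable fun x : ℝ ↦ 2 * √(R ^ 2 - (|x| + d) ^ 2) := by
    refine Continuous.integrable_of_hasCompactSupport (by fun_prop) <|
      HasCompactSupport.intro (isCompact_Icc (a := -R) (b := R)) fun x hx ↦ ?_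
    have : R < |x| := lt_of_not_ge fun h ↦ hx (abs_le.mp h)
    rw [sqrt_eq_zero'.mpr (by nlinarith [abs_nonneg x]), mul_zero]
  simp_rw [add_sq_le_and_sub_sq_le_iff hd]
  rw [volume_setOf_snd_sq_le (f := fun x ↦ R ^ 2 - (|x| + d) ^ 2) (by fun_prop),
    ← ofReal_integral_eq_lintegral_ofReal hg (ae_of_all _ fun x ↦ by positivity)]
  congr 1
  calc ∫ x, 2 * √(R ^ 2 - (|x| + d) ^ 2)
      = 2 * ∫ x in Ioi 0, 2 * √(R ^ 2 - (x + d) ^ 2) :=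
        integral_comp_abs (f := fun x ↦ 2 * √(R ^ 2 - (x + d) ^ 2))
    _ = 4 * ∫ u in Ioi d, √(R ^ 2 - u ^ 2) := by
        have hshift := (measurePreserving_add_right volume d).setIntegral_preimage_emb
          (measurableEmbedding_addRight d) (fun u ↦ √(R ^ 2 - u ^ 2)) (Ioi d)
        rw [preimage_add_const_Ioi, sub_self] at hshift
        rw [integral_const_mul, hshift]
        ring
    _ = _ := by rw [integral_Ioi_sqrt_sq_sub_sq hR (by linarith) hdR]; ring

section Isometry

variable {E : Type*} [NormedAddCommGroup E] [InnerProductSpace ℝ E] [FiniteDimensional ℝ E]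
  [MeasurableSpace E] [BorelSpace E]

theorem exists_measurePreserving_isometry_map_pair {c₁ c₂ d₁ d₂ : E}
    (h : dist c₁ c₂ = dist d₁ d₂) :
    ∃ T : E → E, MeasurePreserving T ∧ Isometry T ∧ T c₁ = d₁ ∧ T c₂ = d₂ := by
  set v := c₂ - c₁
  set w := d₂ - d₁
  have hvw : ‖v‖ = ‖w‖ := by
    rw [← dist_eq_norm, ← dist_eq_norm, dist_comm, h, dist_comm]
  set ρ := (ℝ ∙ (v - w))ᗮ.reflection
  refine ⟨fun x ↦ ρ (x - c₁) + d₁, ?_, ?_, by simp, ?_⟩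
  · exact (measurePreserving_add_right volume d₁).comp
      (ρ.measurePreserving.comp (measurePreserving_sub_right volume c₁))
  · exact Isometry.of_dist_eq fun x y ↦ by rw [dist_add_right, ρ.dist_map, dist_sub_right]
  · show ρ v + d₁ = d₂
    rw [Submodule.reflection_sub hvw, sub_add_cancel]

theorem volume_closedBall_inter_closedBall_congr {c₁ c₂ d₁ d₂ : E}
    (h : dist c₁ c₂ = dist d₁ d₂) (R₁ R₂ : ℝ) :
    volume (closedBall c₁ R₁ ∩ closedBall c₂ R₂)
      = volume (closedBall d₁ R₁ ∩ closedBall d₂ R₂) := by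
  obtain ⟨T, hT, hTiso, rfl, rfl⟩ := exists_measurePreserving_isometry_map_pair h
  have hpre : closedBall c₁ R₁ ∩ closedBall c₂ R₂
      = T ⁻¹' (closedBall (T c₁) R₁ ∩ closedBall (T c₂) R₂) := by
    ext x
    simp [hTiso.dist_eq]
  rw [hpre, hT.measure_preimage
    (measurableSet_closedBall.inter measurableSet_closedBall).nullMeasurableSet]

end Isometry

theorem EuclideanSpace.volume_preserving_toLp_prod :
    MeasurePreserving fun p : ℝ × ℝ ↦ !₂[p.1, p.2] :=
  (PiLp.volume_preserving_toLp (Fin 2)).comp (volume_preserving_finTwoArrow ℝ).symm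

theorem EuclideanSpace.preimage_toLp_prod_closedBall (a b : ℝ) {R : ℝ} (hR : 0 ≤ R) :
    (fun p : ℝ × ℝ ↦ !₂[p.1, p.2]) ⁻¹' closedBall !₂[a, b] R
      = {p | (p.1 - a) ^ 2 + (p.2 - b) ^ 2 ≤ R ^ 2} := by
  ext p
  simp [EuclideanSpace.dist_eq, sqrt_le_left hR, Real.dist_eq, sq_abs]

/-- The area of the intersection of two disks of radius `R` in the plane whose
centers are at distance `r`, for `0 ≤ r ≤ 2R`, equals
`2R²·arccos(r/(2R)) - r·√(R² - r²/4)`. -/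
theorem area_inter_disks (R r : ℝ) (hR : 0 < R) (hr0 : 0 ≤ r) (hr2 : r ≤ 2 * R)
    (c₁ c₂ : EuclideanSpace ℝ (Fin 2)) (hd : dist c₁ c₂ = r) :
    volume (Metric.closedBall c₁ R ∩ Metric.closedBall c₂ R)
      = ENNReal.ofReal
          (2 * R ^ 2 * Real.arccos (r / (2 * R)) - r * Real.sqrt (R ^ 2 - r ^ 2 / 4)) := by
  have hdist : dist c₁ c₂ = dist !₂[-(r / 2), 0] !₂[r / 2, 0] := by
    simp [hd, EuclideanSpace.dist_eq, Real.dist_eq, ← neg_add', sqrt_sq hr0]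
  rw [volume_closedBall_inter_closedBall_congr hdist,
    ← EuclideanSpace.volume_preserving_toLp_prod.measure_preimage
      (measurableSet_closedBall.inter measurableSet_closedBall).nullMeasurableSet,
    preimage_inter, EuclideanSpace.preimage_toLp_prod_closedBall _ _ hR.le,
    EuclideanSpace.preimage_toLp_prod_closedBall _ _ hR.le]
  simp only [sub_neg_eq_add, sub_zero, ← ofPred_and]
  rw [volume_lens_prod hR (by positivity) (by linarith), div_div]
  ring_nf
end

section
/- For α > 2 and ρ ∈ (0,1), the MISR of the typical cell-center user equals 2ρ^α/(α-2), computed as [(2ρ^{2+α}/(2+α))/ρ²]·[(α+2)/(α-2)], and consequently the asymptotic SIR gain of the cell-center user over the typical user is ρ^{-α} > 1. -/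
open Real

theorem Real.rpow_two_add_div_sq {ρ : ℝ} (hρ : 0 < ρ) (α : ℝ) : ρ ^ (2 + α) / ρ ^ 2 = ρ ^ α := by
  rw [rpow_add hρ, rpow_two, mul_div_cancel_left₀ _ (by positivity)]

theorem cellCenter_misr_eq {α ρ : ℝ} (hρ : 0 < ρ) (hα : 2 + α ≠ 0) :
    2 * ρ ^ (2 + α) / (2 + α) / ρ ^ 2 * ((α + 2) / (α - 2)) = 2 * ρ ^ α / (α - 2) :=
  calc 2 * ρ ^ (2 + α) / (2 + α) / ρ ^ 2 * ((α + 2) / (α - 2))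
      = 2 * (ρ ^ (2 + α) / ρ ^ 2) / (2 + α) * ((2 + α) / (α - 2)) := by ring
    _ = 2 * ρ ^ α / (α - 2) := by rw [rpow_two_add_div_sq hρ, div_mul_div_cancel₀ hα]

theorem div_div_mul_div_eq_inv {K : Type*} [Field K] {a b : K} (ha : a ≠ 0) (hb : b ≠ 0)
    (x : K) : a / b / (a * x / b) = x⁻¹ := by
  rw [div_div_div_cancel_right₀ hb, div_mul_cancel_left₀ ha]

/-- For `α > 2` and `ρ ∈ (0,1)`, the MISR of the typical cell-center user equals
`2ρ^α/(α-2)`, computed as `[(2ρ^{2+α}/(2+α))/ρ²]·[(α+2)/(α-2)]`, and consequently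
the asymptotic SIR gain of the cell-center user over the typical user is
`(2/(α-2))/(2ρ^α/(α-2)) = ρ^{-α} > 1`. -/
theorem cell_center_misr_and_gain (α ρ : ℝ) (hα : 2 < α) (hρ0 : 0 < ρ) (hρ1 : ρ < 1) :
    2 * ρ ^ (2 + α) / (2 + α) / ρ ^ 2 * ((α + 2) / (α - 2)) = 2 * ρ ^ α / (α - 2) ∧
    (2 / (α - 2)) / (2 * ρ ^ α / (α - 2)) = ρ ^ (-α) ∧
    1 < ρ ^ (-α) := by
  refine ⟨cellCenter_misr_eq hρ0 (by linarith), ?_,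
    one_lt_rpow_of_pos_of_lt_one_of_neg hρ0 hρ1 (by linarith)⟩
  rw [div_div_mul_div_eq_inv two_ne_zero (sub_ne_zero.2 hα.ne'), rpow_neg hρ0.le]
end
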